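/- arXiv:2209.10613 — 5 statements merged into one kernel-verified Lean document; each statement's English description precedes it below -/
import Mathlib

section
/- Let X be a 7×7 real matrix of type Λ²₇, i.e. X = u ⌟ φ for some u ∈ E. Then rank X = 0 or rank X = 6. -/
/-!
For `X = u ⌟ φ` one has `X u = 0` and the octonionic identity `X² = u uᵀ - |u|² I`.
If `u ≠ 0` and `X v = 0`, applying `X` once more gives `(u · v) u = |u|² v`, so the kernel
of `X` is the line `ℝ u` and `rank X = 7 - 1 = 6`.
-/

open scoped BigOperators RealInnerProductSpace Matrix

noncomputable section

/-- Euclidean 7-space. -/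
abbrev E7 := EuclideanSpace ℝ (Fin 7)

/-- Kronecker delta. -/
def kd (i j : Fin 7) : ℝ := if i = j then 1 else 0

/-- The totally antisymmetric 3-array with value 1 at `(a,b,c)` (for distinct `a,b,c`). -/
def tripleForm (a b c i j k : Fin 7) : ℝ :=
  kd i a * (kd j b * kd k c - kd j c * kd k b)
  - kd i b * (kd j a * kd k c - kd j c * kd k a)
  + kd i c * (kd j a * kd k b - kd j b * kd k a)

/-- The G₂ 3-form `φ` on `ℝ⁷` (indices 0-based: φ₁₂₃ = φ(0,1,2) etc.). -/
def phi7 (i j k : Fin 7) : ℝ :=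
  tripleForm 0 1 2 i j k + tripleForm 0 3 4 i j k + tripleForm 1 3 5 i j k
  + tripleForm 2 3 6 i j k + tripleForm 1 4 6 i j k
  - tripleForm 2 4 5 i j k - tripleForm 0 5 6 i j k

/-- The totally antisymmetric 4-array with value 1 at `(a,b,c,d)` (for distinct `a,b,c,d`). -/
def quadForm (a b c d i j k l : Fin 7) : ℝ :=
  Matrix.det !![kd i a, kd i b, kd i c, kd i d;
                kd j a, kd j b, kd j c, kd j d;
                kd k a, kd k b, kd k c, kd k d;
                kd l a, kd l b, kd l c, kd l d]

/-- The 4-form `ψ = ⋆φ` on `ℝ⁷` (indices 0-based). -/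
def psi7 (i j k l : Fin 7) : ℝ :=
  quadForm 3 4 5 6 i j k l + quadForm 0 2 3 5 i j k l + quadForm 1 2 5 6 i j k l
  + quadForm 0 2 4 6 i j k l + quadForm 0 1 4 5 i j k l
  - quadForm 1 2 3 4 i j k l - quadForm 0 1 3 6 i j k l

/-- The cross product on `ℝ⁷`: `(u × v)_k = Σ_{p,q} u_p v_q φ(p,q,k)`. -/
def crossE (u v : E7) : E7 := WithLp.toLp 2 (fun k => ∑ p, ∑ q, u p * v q * phi7 p q k)

/-- The matrix `u ⌟ φ`, with entries `(u ⌟ φ)(i,j) = Σ_p u_p φ(p,i,j)`. -/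
def contractPhi (u : E7) : Matrix (Fin 7) (Fin 7) ℝ :=
  Matrix.of fun i j => ∑ p, u p * phi7 p i j

/-- The matrix `u ∧ v`, with entries `u_i v_j - u_j v_i`. -/
def wedgeM (u v : E7) : Matrix (Fin 7) (Fin 7) ℝ :=
  Matrix.of fun i j => u i * v j - u j * v i

/-- The matrix `Ψ_{uv}`, with entries `Σ_{p,q} u_p v_q ψ(p,q,i,j)`. -/
def PsiM (u v : E7) : Matrix (Fin 7) (Fin 7) ℝ :=
  Matrix.of fun i j => ∑ p, ∑ q, u p * v q * psi7 p q i j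

/-- Evaluation of a matrix as a bilinear form: `X(u,v) = Σ_{i,j} u_i v_j X(i,j)`. -/
def Xform (X : Matrix (Fin 7) (Fin 7) ℝ) (u v : E7) : ℝ := ∑ i, ∑ j, u i * v j * X i j

/-- `X.mulVec v` as a map `E7 → E7`. -/
def mulVecE (X : Matrix (Fin 7) (Fin 7) ℝ) (v : E7) : E7 := WithLp.toLp 2 (fun i => ∑ j, X i j * v j)

/-- A skew-symmetric matrix is of type `Λ²₁₄` (i.e. lies in 𝔤₂). -/
def IsType14 (X : Matrix (Fin 7) (Fin 7) ℝ) : Prop :=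
  ∀ i j k : Fin 7, ∑ p, (X i p * phi7 p j k + X j p * phi7 i p k + X k p * phi7 i j p) = 0

/-- A G₂-adapted frame: an orthonormal basis `e₁,…,e₇` with
`e₃ = e₁ × e₂`, `e₅ = e₁ × e₄`, `e₆ = e₂ × e₄`, `e₇ = e₃ × e₄` (0-based indices). -/
def IsG2Frame (e : Fin 7 → E7) : Prop :=
  Orthonormal ℝ e ∧ e 2 = crossE (e 0) (e 1) ∧ e 4 = crossE (e 0) (e 3)
  ∧ e 5 = crossE (e 1) (e 3) ∧ e 6 = crossE (e 2) (e 3)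

/-- An associative 3-plane: a 3-dimensional subspace closed under the cross product. -/
def IsAssociative (P : Submodule ℝ E7) : Prop :=
  Module.finrank ℝ P = 3 ∧ ∀ u ∈ P, ∀ v ∈ P, crossE u v ∈ P

open Matrix

namespace Matrix

variable {n K : Type*} [Fintype n] [DecidableEq n] [Field K]

theorem ker_mulVecLin_eq_span_of_mul_self_eq {A : Matrix n n K} {u : n → K}
    (hu : u ⬝ᵥ u ≠ 0) (hAu : A *ᵥ u = 0) (hAA : A * A = vecMulVec u u - (u ⬝ᵥ u) • 1) :
    LinearMap.ker A.mulVecLin = K ∙ u := by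
  refine le_antisymm (fun v hv => ?_) ((Submodule.span_singleton_le_iff_mem _ _).2 hAu)
  have hv : A *ᵥ v = 0 := hv
  have hAAv : (A * A) *ᵥ v = 0 := by rw [← mulVec_mulVec, hv, mulVec_zero]
  rw [hAA, sub_mulVec, vecMulVec_mulVec, op_smul_eq_smul, smul_mulVec, one_mulVec,
    sub_eq_zero] at hAAv
  refine Submodule.mem_span_singleton.2 ⟨(u ⬝ᵥ u)⁻¹ * (u ⬝ᵥ v), ?_⟩
  rw [mul_smul, hAAv, inv_smul_smul₀ hu]

theorem rank_eq_card_sub_one_of_mul_self_eq {A : Matrix n n K} {u : n → K}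
    (hu : u ⬝ᵥ u ≠ 0) (hAu : A *ᵥ u = 0) (hAA : A * A = vecMulVec u u - (u ⬝ᵥ u) • 1) :
    A.rank = Fintype.card n - 1 := by
  have hu0 : u ≠ 0 := by rintro rfl; simp at hu
  have := LinearMap.finrank_range_add_finrank_ker A.mulVecLin
  rw [ker_mulVecLin_eq_span_of_mul_self_eq hu hAu hAA, finrank_span_singleton hu0,
    Module.finrank_fintype_fun_eq_card] at this
  rw [rank]
  omega

end Matrix

theorem sum_mul_tripleForm (u : E7) (a b c i j : Fin 7) :
    ∑ p, u p * tripleForm a b c p i j =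
      u a * (kd i b * kd j c - kd i c * kd j b) - u b * (kd i a * kd j c - kd i c * kd j a)
        + u c * (kd i a * kd j b - kd i b * kd j a) := by
  have hkd (a : Fin 7) : ∑ p, u p * kd p a = u a := by simp [kd]
  simp only [tripleForm, mul_add, mul_sub, ← mul_assoc, Finset.sum_add_distrib,
    Finset.sum_sub_distrib, ← Finset.sum_mul, hkd]

theorem contractPhi_eq (u : E7) : contractPhi u =
    !![0, u 2, -u 1, u 4, -u 3, -u 6, u 5;
      -u 2, 0, u 0, u 5, u 6, -u 3, -u 4;
      u 1, -u 0, 0, u 6, -u 5, u 4, -u 3;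
      -u 4, -u 5, -u 6, 0, u 0, u 1, u 2;
      u 3, -u 6, u 5, -u 0, 0, -u 2, u 1;
      u 6, u 3, -u 4, -u 1, u 2, 0, -u 0;
      -u 5, u 4, u 3, -u 2, -u 1, u 0, 0] := by
  ext i j
  simp only [contractPhi, of_apply, phi7, mul_add, mul_sub, Finset.sum_add_distrib,
    Finset.sum_sub_distrib, sum_mul_tripleForm]
  fin_cases i <;> fin_cases j <;> simp [kd]

theorem contractPhi_mul_self (u : E7) :
    contractPhi u * contractPhi u = vecMulVec u u - (u ⬝ᵥ u) • 1 := by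
  rw [contractPhi_eq]
  ext i j
  fin_cases i <;> fin_cases j <;>
    simp [Matrix.mul_apply, Fin.sum_univ_seven, vecMulVec, dotProduct] <;> ring

theorem contractPhi_mulVec_self (u : E7) : contractPhi u *ᵥ u = 0 := by
  rw [contractPhi_eq]
  ext i
  fin_cases i <;> simp [mulVec, dotProduct, Fin.sum_univ_seven] <;> ring

theorem contractPhi_zero : contractPhi 0 = 0 := by
  ext
  simp [contractPhi]

theorem rank_contractPhi_of_ne_zero {u : E7} (hu : u ≠ 0) : (contractPhi u).rank = 6 := by
  have huu : (u : Fin 7 → ℝ) ⬝ᵥ u ≠ 0 := fun h => hu (by simpa using dotProduct_self_eq_zero.1 h)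
  simpa using rank_eq_card_sub_one_of_mul_self_eq huu (contractPhi_mulVec_self u)
    (contractPhi_mul_self u)

/-- An element of `Λ²₇` has rank 0 or 6. -/
theorem stmt5 (X : Matrix (Fin 7) (Fin 7) ℝ) (h : ∃ u : E7, X = contractPhi u) :
    X.rank = 0 ∨ X.rank = 6 := by
  obtain ⟨u, rfl⟩ := h
  rcases eq_or_ne u 0 with rfl | hu
  · left
    rw [contractPhi_zero, rank_zero]
  · exact .inr (rank_contractPhi_of_ne_zero hu)

end
end

section
/- Let X be a skew-symmetric 7×7 real matrix of type Λ²₁₄, and let u, v, y ∈ E be pairwise orthogonal. Then X(u × y, v × y) = ‖y‖² X(u, v) + X(y, (u × v) × y). -/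
open scoped BigOperators RealInnerProductSpace Matrix

noncomputable section

/-! Skewness and the `Λ²₁₄` condition make `X` a derivation of the cross product,
`X (a × b) = X a × b + a × X b`. Splitting `X(u × y, v × y) = ⟨u × y, X (v × y)⟩` accordingly,
`⟨u × y, X v × y⟩ = ‖y‖² X(u,v)` by the Lagrange-type identity
`⟨a × b, c × b⟩ = ⟨a,c⟩‖b‖² - ⟨a,b⟩⟨c,b⟩` and `u ⊥ y`. The other term `⟨u × y, v × X y⟩` equals
`-⟨u × v, y × X y⟩ = X(y, (u × v) × y)` because the 4-form
`ψ(a,b,c,d) = ⟨a,c⟩⟨b,d⟩ - ⟨a,d⟩⟨b,c⟩ - ⟨a × b, c × d⟩` is alternating, which for pairwise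
orthogonal `u, v, y` leaves only the cross-product terms. Both identities are polynomial in the
coordinates of the cross product. -/

lemma EuclideanSpace.real_inner_eq_sum {ι : Type*} [Fintype ι] (a b : EuclideanSpace ℝ ι) :
    ⟪a, b⟫ = ∑ i, a i * b i := by
  simp [PiLp.inner_apply, mul_comm]

lemma crossE_eq (a b : E7) :
    crossE a b = !₂[a 1 * b 2 - a 2 * b 1 + a 3 * b 4 - a 4 * b 3 - a 5 * b 6 + a 6 * b 5,
      a 2 * b 0 - a 0 * b 2 + a 3 * b 5 - a 5 * b 3 + a 4 * b 6 - a 6 * b 4,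
      a 0 * b 1 - a 1 * b 0 + a 3 * b 6 - a 6 * b 3 - a 4 * b 5 + a 5 * b 4,
      a 4 * b 0 - a 0 * b 4 + a 5 * b 1 - a 1 * b 5 + a 6 * b 2 - a 2 * b 6,
      a 0 * b 3 - a 3 * b 0 + a 6 * b 1 - a 1 * b 6 - a 5 * b 2 + a 2 * b 5,
      a 1 * b 3 - a 3 * b 1 - a 2 * b 4 + a 4 * b 2 - a 6 * b 0 + a 0 * b 6,
      a 2 * b 3 - a 3 * b 2 + a 1 * b 4 - a 4 * b 1 - a 0 * b 5 + a 5 * b 0] := by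
  ext k
  fin_cases k <;> simp [crossE, phi7, tripleForm, kd, Fin.sum_univ_seven] <;> ring

lemma crossE_swap (a b : E7) : crossE b a = -crossE a b := by
  ext k
  fin_cases k <;>
    simp only [crossE_eq, PiLp.neg_apply, Matrix.cons_val_zero, Matrix.cons_val_one,
      Matrix.cons_val, Fin.reduceFinMk, Fin.zero_eta, Fin.mk_one] <;> ring

lemma crossE_neg_left (a b : E7) : crossE (-a) b = -crossE a b := by
  ext k
  simp [crossE, Finset.sum_neg_distrib]

lemma crossE_neg_right (a b : E7) : crossE a (-b) = -crossE a b := by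
  ext k
  simp [crossE, Finset.sum_neg_distrib]

lemma inner_crossE_left (a b c : E7) : ⟪crossE a b, c⟫ = ⟪a, crossE b c⟫ := by
  simp only [EuclideanSpace.real_inner_eq_sum, crossE_eq, Fin.sum_univ_seven,
    Matrix.cons_val_zero, Matrix.cons_val_one, Matrix.cons_val]
  ring

lemma inner_crossE_crossE_add (a b c d : E7) :
    ⟪crossE a b, crossE c d⟫ + ⟪crossE a c, crossE b d⟫
      = ⟪a, c⟫ * ⟪b, d⟫ + ⟪a, b⟫ * ⟪c, d⟫ - 2 * ⟪a, d⟫ * ⟪b, c⟫ := by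
  simp only [EuclideanSpace.real_inner_eq_sum, crossE_eq, Fin.sum_univ_seven,
    Matrix.cons_val_zero, Matrix.cons_val_one, Matrix.cons_val]
  ring

lemma inner_crossE_crossE_same_right (a b c : E7) :
    ⟪crossE a b, crossE c b⟫ = ⟪a, c⟫ * ‖b‖ ^ 2 - ⟪a, b⟫ * ⟪c, b⟫ := by
  have h := inner_crossE_crossE_add a b b c
  rw [crossE_swap c b, inner_neg_right, real_inner_self_eq_norm_sq,
    real_inner_comm c b] at h
  linarith

lemma mulVecE_neg (X : Matrix (Fin 7) (Fin 7) ℝ) (a : E7) : mulVecE (-X) a = -mulVecE X a := by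
  ext i
  simp [mulVecE, Finset.sum_neg_distrib]

lemma Xform_eq_inner (X : Matrix (Fin 7) (Fin 7) ℝ) (a b : E7) :
    Xform X a b = ⟪a, mulVecE X b⟫ := by
  simp only [Xform, EuclideanSpace.real_inner_eq_sum, mulVecE, Finset.mul_sum]
  simp only [mul_comm, mul_left_comm]

lemma inner_mulVecE_right (X : Matrix (Fin 7) (Fin 7) ℝ) (a b : E7) :
    ⟪a, mulVecE X b⟫ = ⟪mulVecE Xᵀ a, b⟫ := by
  simp only [EuclideanSpace.real_inner_eq_sum, mulVecE, Matrix.transpose_apply,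
    Finset.mul_sum, Finset.sum_mul]
  rw [Finset.sum_comm]
  simp only [mul_assoc, mul_left_comm]

lemma IsType14.crossE_add_crossE_add_mulVecE {X : Matrix (Fin 7) (Fin 7) ℝ} (h14 : IsType14 X)
    (a b : E7) :
    crossE (mulVecE Xᵀ a) b + crossE a (mulVecE Xᵀ b) + mulVecE X (crossE a b) = 0 := by
  ext k
  have h : ∑ i, ∑ j, a i * b j *
      ∑ p, (X i p * phi7 p j k + X j p * phi7 i p k + X k p * phi7 i j p) = 0 :=
    Finset.sum_eq_zero fun i _ => Finset.sum_eq_zero fun j _ => by rw [h14 i j k, mul_zero]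
  simp only [Finset.mul_sum, mul_add, Finset.sum_add_distrib] at h
  simp only [mulVecE, crossE, PiLp.add_apply, Matrix.transpose_apply, Finset.mul_sum,
    Finset.sum_mul, PiLp.zero_apply]
  rw [← h]
  congr 1; congr 1
  · rw [Finset.sum_comm_cycle]
    refine Finset.sum_congr rfl fun i _ => ?_
    rw [Finset.sum_comm]
    simp only [mul_comm, mul_assoc, mul_left_comm]
  · refine Finset.sum_congr rfl fun i _ => ?_
    rw [Finset.sum_comm]
    simp only [mul_comm, mul_assoc, mul_left_comm]
  · conv_rhs => rw [Finset.sum_comm_cycle]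
    simp only [mul_comm, mul_assoc]

lemma IsType14.mulVecE_crossE {X : Matrix (Fin 7) (Fin 7) ℝ} (hskew : Xᵀ = -X)
    (h14 : IsType14 X) (a b : E7) :
    mulVecE X (crossE a b) = crossE (mulVecE X a) b + crossE a (mulVecE X b) := by
  have h := h14.crossE_add_crossE_add_mulVecE a b
  rw [hskew, mulVecE_neg, mulVecE_neg, crossE_neg_left, crossE_neg_right] at h
  linear_combination (norm := module) h

/-- Proposition 2.1: for `X ∈ 𝔤₂` and orthogonal `u, v, y`,
`X(u × y, v × y) = |y|² X(u,v) + X(y, (u × v) × y)`. -/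
theorem stmt7 (X : Matrix (Fin 7) (Fin 7) ℝ) (hskew : Xᵀ = -X) (h14 : IsType14 X)
    (u v y : E7) (huv : ⟪u, v⟫ = 0) (huy : ⟪u, y⟫ = 0) (hvy : ⟪v, y⟫ = 0) :
    Xform X (crossE u y) (crossE v y)
      = ‖y‖ ^ 2 * Xform X u v + Xform X y (crossE (crossE u v) y) := by
  set w := mulVecE X y
  have hlhs : Xform X (crossE u y) (crossE v y)
      = ‖y‖ ^ 2 * Xform X u v + ⟪crossE u y, crossE v w⟫ := by
    rw [Xform_eq_inner, h14.mulVecE_crossE hskew, inner_add_right,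
      inner_crossE_crossE_same_right, huy, Xform_eq_inner]
    ring
  have hrhs : Xform X y (crossE (crossE u v) y) = -⟪crossE u v, crossE y w⟫ := by
    rw [Xform_eq_inner, inner_mulVecE_right, hskew, mulVecE_neg, inner_neg_left,
      real_inner_comm, inner_crossE_left]
  have hpsi := inner_crossE_crossE_add u y v w
  rw [huv, huy, real_inner_comm v y, hvy] at hpsi
  rw [hlhs, hrhs]
  linarith

end
end

section
/- Let X be a skew-symmetric 7×7 real matrix of type Λ²₁₄ and let u ∈ E. Then [X, u ⌟ φ] = (X.mulVec u) ⌟ φ, where (X.mulVec u)_p = Σ_k X(p,k) u_k. In particular, the commutator of a matrix of type Λ²₁₄ with a matrix of type Λ²₇ is of type Λ²₇. -/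
open scoped BigOperators RealInnerProductSpace Matrix

noncomputable section

/-!
Write `u ⌟ φ = ∑ₚ uₚ Φₚ` with `Φₚ = φ(p, ·, ·)`. For a skew-symmetric `X`, the `Λ²₁₄` condition
at `(p, i, j)` says exactly that `[X, Φₚ] = ∑_q X(q, p) Φ_q`; summing against `u` gives
`[X, u ⌟ φ] = (X u) ⌟ φ`.
-/

open Finset

namespace Matrix

variable {n R : Type*} [Fintype n] [CommRing R]

/-- The infinitesimal action of `X` on the trilinear form `φ` vanishes. -/
def AnnihilatesForm (X : Matrix n n R) (φ : n → n → n → R) : Prop :=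
  ∀ i j k, ∑ p, (X i p * φ p j k + X j p * φ i p k + X k p * φ i j p) = 0

def contract (φ : n → n → n → R) (u : n → R) : Matrix n n R :=
  of fun i j => ∑ p, u p * φ p i j

theorem contract_eq_sum_smul (φ : n → n → n → R) (u : n → R) :
    contract φ u = ∑ p, u p • of (φ p) := by
  ext i j
  simp [contract, Matrix.sum_apply]

variable {X : Matrix n n R} {φ : n → n → n → R}

theorem mul_of_sub_of_mul_eq_sum_smul (hskew : Xᵀ = -X) (hX : X.AnnihilatesForm φ) (p : n) :
    X * of (φ p) - of (φ p) * X = ∑ q, X q p • of (φ q) := by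
  have hneg : ∀ a b, X a b = -X b a := fun a b => by
    rw [← neg_apply, ← hskew, transpose_apply]
  ext i j
  have h := hX p i j
  simp only [sum_add_distrib, hneg p, hneg j, neg_mul, sum_neg_distrib] at h
  simp only [sub_apply, mul_apply, of_apply, Matrix.sum_apply, smul_apply, smul_eq_mul,
    mul_comm (φ p i _)]
  linear_combination h

theorem mul_contract_sub_contract_mul (hskew : Xᵀ = -X) (hX : X.AnnihilatesForm φ) (u : n → R) :
    X * contract φ u - contract φ u * X = contract φ (X *ᵥ u) := by
  simp only [contract_eq_sum_smul, mul_sum, sum_mul, mul_smul_comm, smul_mul_assoc,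
    ← sum_sub_distrib, ← smul_sub, mul_of_sub_of_mul_eq_sum_smul hskew hX, smul_sum, smul_smul]
  rw [sum_comm]
  simp only [← sum_smul, mulVec, dotProduct, mul_comm]

end Matrix

/-- `[X, u ⌟ φ] = (X u) ⌟ φ` for `X ∈ Λ²₁₄`; in particular `[Λ²₁₄, Λ²₇] ⊆ Λ²₇`. -/
theorem stmt8 (X : Matrix (Fin 7) (Fin 7) ℝ) (hskew : Xᵀ = -X) (h14 : IsType14 X)
    (u : E7) :
    X * contractPhi u - contractPhi u * X = contractPhi (mulVecE X u) ∧
    (∀ Y : Matrix (Fin 7) (Fin 7) ℝ, (∃ v : E7, Y = contractPhi v) →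
      ∃ w : E7, X * Y - Y * X = contractPhi w) := by
  have commutator_eq : ∀ v : E7,
      X * contractPhi v - contractPhi v * X = contractPhi (mulVecE X v) :=
    fun v => Matrix.mul_contract_sub_contract_mul hskew h14 v
  exact ⟨commutator_eq u, fun _ ⟨v, hY⟩ => ⟨mulVecE X v, hY ▸ commutator_eq v⟩⟩

end
end

section
/- For all u, v ∈ E: (1) u ∧ v = (u × v) ⌟ φ + Ψ_{uv} as 7×7 matrices; and (2) the matrix M = 2 (u ∧ v) + Ψ_{uv} satisfies Σ_{p,q} M(p,q) φ(p,q,k) = 0 for every k (so that (1/3)(u ∧ v - Ψ_{uv}) and (1/3)(2(u ∧ v) + Ψ_{uv}) are, respectively, the Λ²₇ and Λ²₁₄ components of u ∧ v). -/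
open scoped BigOperators RealInnerProductSpace Matrix

noncomputable section

/-!
Both identities are bilinear in `u` and `v`, so they reduce to identities between the structure
constants: `∑ p, φ a b p * φ p i j = δ a i * δ b j - δ a j * δ b i - ψ a b i j` gives (1), and
`∑ p q, ψ a b p q * φ p q k = -4 * φ a b k` gives (2), since contracting `2 (u ∧ v)` with `φ`
yields `4 (u × v)` while contracting `Ψ_{uv}` yields `-4 (u × v)`. All entries of `φ` and `ψ` are
integer polynomials in Kronecker deltas, so after casting to `ℤ` the two contraction identities
are finite checks that the kernel decides.
-/

theorem Fintype.sum_comm₄ {α β M : Type*} [Fintype α] [Fintype β] [AddCommMonoid M]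
    (g : α → α → β → β → M) :
    ∑ p, ∑ q, ∑ a, ∑ b, g p q a b = ∑ a, ∑ b, ∑ p, ∑ q, g p q a b :=
  calc ∑ p, ∑ q, ∑ a, ∑ b, g p q a b = ∑ x : α × α, ∑ y : β × β, g x.1 x.2 y.1 y.2 := by
        simp only [Fintype.sum_prod_type]
    _ = ∑ y : β × β, ∑ x : α × α, g x.1 x.2 y.1 y.2 := Finset.sum_comm
    _ = ∑ a, ∑ b, ∑ p, ∑ q, g p q a b := by simp only [Fintype.sum_prod_type]

lemma kd_eq_intCast (i j : Fin 7) : kd i j = ((if i = j then 1 else 0 : ℤ) : ℝ) := by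
  unfold kd; split_ifs <;> simp

-- Expanded so that the kernel never has to evaluate `Matrix.det` (a sum over `Equiv.Perm (Fin 4)`).
lemma quadForm_eq_cofactor_expansion (a b c d i j k l : Fin 7) :
    quadForm a b c d i j k l =
      kd i a * (kd j b * (kd k c * kd l d - kd k d * kd l c)
        - kd j c * (kd k b * kd l d - kd k d * kd l b) + kd j d * (kd k b * kd l c - kd k c * kd l b))
      - kd i b * (kd j a * (kd k c * kd l d - kd k d * kd l c)
        - kd j c * (kd k a * kd l d - kd k d * kd l a) + kd j d * (kd k a * kd l c - kd k c * kd l a))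
      + kd i c * (kd j a * (kd k b * kd l d - kd k d * kd l b)
        - kd j b * (kd k a * kd l d - kd k d * kd l a) + kd j d * (kd k a * kd l b - kd k b * kd l a))
      - kd i d * (kd j a * (kd k b * kd l c - kd k c * kd l b)
        - kd j b * (kd k a * kd l c - kd k c * kd l a) + kd j c * (kd k a * kd l b - kd k b * kd l a)) := by
  simp [quadForm, Matrix.det_succ_row_zero, Fin.sum_univ_succ, Fin.succAbove]
  ring

lemma sum_phi7_mul_phi7 (a b i j : Fin 7) :
    ∑ p, phi7 a b p * phi7 p i j = kd a i * kd b j - kd a j * kd b i - psi7 a b i j := by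
  simp only [phi7, tripleForm, psi7, quadForm_eq_cofactor_expansion, kd_eq_intCast]
  norm_cast
  revert a b i j
  decide +kernel

lemma sum_psi7_mul_phi7 (a b k : Fin 7) :
    ∑ p, ∑ q, psi7 a b p q * phi7 p q k = -4 * phi7 a b k := by
  simp only [phi7, tripleForm, psi7, quadForm_eq_cofactor_expansion, kd_eq_intCast]
  norm_cast
  revert a b k
  decide +kernel

lemma phi7_swap (p q k : Fin 7) : phi7 q p k = -phi7 p q k := by
  simp only [phi7, tripleForm]; ring

lemma crossE_apply (u v : E7) (k : Fin 7) :
    crossE u v k = ∑ p, ∑ q, u p * v q * phi7 p q k := rfl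

lemma wedgeM_apply_eq_sum (u v : E7) (i j : Fin 7) :
    wedgeM u v i j = ∑ a, ∑ b, u a * v b * (kd a i * kd b j - kd a j * kd b i) := by
  simp [wedgeM, kd, mul_sub, Finset.sum_sub_distrib]

lemma contractPhi_crossE_apply (u v : E7) (i j : Fin 7) :
    contractPhi (crossE u v) i j = ∑ a, ∑ b, u a * v b * ∑ p, phi7 a b p * phi7 p i j := by
  simp only [contractPhi, crossE_apply, Matrix.of_apply, Finset.sum_mul, Finset.mul_sum, mul_assoc]
  exact Finset.sum_comm_cycle.symm

lemma sum_wedgeM_mul_phi7 (u v : E7) (k : Fin 7) :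
    ∑ p, ∑ q, wedgeM u v p q * phi7 p q k = 2 * crossE u v k := by
  have hswap : ∑ p, ∑ q, u q * v p * phi7 p q k = -crossE u v k := by
    rw [Finset.sum_comm, crossE_apply, ← Finset.sum_neg_distrib]
    refine Finset.sum_congr rfl fun p _ => ?_
    rw [← Finset.sum_neg_distrib]
    refine Finset.sum_congr rfl fun q _ => ?_
    rw [phi7_swap, mul_neg]
  simp only [wedgeM, Matrix.of_apply, sub_mul, Finset.sum_sub_distrib, hswap, ← crossE_apply]
  ring

lemma sum_PsiM_mul_phi7 (u v : E7) (k : Fin 7) :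
    ∑ p, ∑ q, PsiM u v p q * phi7 p q k = -4 * crossE u v k :=
  calc ∑ p, ∑ q, PsiM u v p q * phi7 p q k
      = ∑ a, ∑ b, u a * v b * ∑ p, ∑ q, psi7 a b p q * phi7 p q k := by
        simp only [PsiM, Matrix.of_apply, Finset.sum_mul, Finset.mul_sum, mul_assoc]
        exact Fintype.sum_comm₄ _
    _ = -4 * crossE u v k := by
        simp only [sum_psi7_mul_phi7, crossE_apply, Finset.mul_sum]
        exact Finset.sum_congr rfl fun a _ => Finset.sum_congr rfl fun b _ => by ring

/-- `u ∧ v = (u × v) ⌟ φ + Ψ_{uv}`, and `2(u ∧ v) + Ψ_{uv}` has vanishing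
contraction with `φ` (so it is the `Λ²₁₄` part, up to the factor 1/3). -/
theorem stmt10 (u v : E7) :
    wedgeM u v = contractPhi (crossE u v) + PsiM u v ∧
    (∀ k : Fin 7, ∑ p, ∑ q, ((2 : ℝ) • wedgeM u v + PsiM u v) p q * phi7 p q k = 0) := by
  refine ⟨Matrix.ext fun i j => ?_, fun k => ?_⟩
  · simp only [Matrix.add_apply, wedgeM_apply_eq_sum, contractPhi_crossE_apply, PsiM,
      Matrix.of_apply, ← Finset.sum_add_distrib, ← mul_add, sum_phi7_mul_phi7, sub_add_cancel]
  · simp only [Matrix.add_apply, Matrix.smul_apply, smul_eq_mul, add_mul, mul_assoc,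
      Finset.sum_add_distrib, ← Finset.mul_sum, sum_wedgeM_mul_phi7, sum_PsiM_mul_phi7]
    ring

end
end

section
/- Let P be an associative 3-plane and let u, v, w, y ∈ P. Then the matrices u ∧ v and Ψ_{wy} commute: [u ∧ v, Ψ_{wy}] = 0. -/
open scoped BigOperators RealInnerProductSpace Matrix

noncomputable section

/-!
The contraction identity `φ_{pqa} φ_{abj} = δ_{pb} δ_{qj} - δ_{pj} δ_{qb} - ψ_{pqbj}` gives
`(w × y) × x = ⟪w, x⟫ y - ⟪y, x⟫ w + Ψ_{wy} x`, so `Ψ_{wy}` maps `P` into itself when `w, y ∈ P`.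
Moreover `⟪z, Ψ_{wy} x⟫ = ψ(w, y, z, x)`, and the alternating 4-form `ψ` vanishes on the
3-dimensional space `P`; taking `z = Ψ_{wy} x` shows `Ψ_{wy} x = 0` for all `x ∈ P`. Since `Ψ_{wy}`
is skew, also `xᵀ Ψ_{wy} = 0`, so `Ψ_{wy}` annihilates `u ∧ v = u vᵀ - v uᵀ` from both sides.
-/

open Matrix

lemma Finset.sum_comm_pairs {α β γ δ M : Type*} [AddCommMonoid M] (s : Finset α) (t : Finset β)
    (u : Finset γ) (v : Finset δ) (f : α → β → γ → δ → M) :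
    ∑ a ∈ s, ∑ b ∈ t, ∑ c ∈ u, ∑ d ∈ v, f a b c d
      = ∑ c ∈ u, ∑ d ∈ v, ∑ a ∈ s, ∑ b ∈ t, f a b c d := by
  calc _ = ∑ a ∈ s, ∑ c ∈ u, ∑ b ∈ t, ∑ d ∈ v, f a b c d :=
        Finset.sum_congr rfl fun a _ => Finset.sum_comm
    _ = ∑ c ∈ u, ∑ a ∈ s, ∑ d ∈ v, ∑ b ∈ t, f a b c d := by
        rw [Finset.sum_comm]
        exact Finset.sum_congr rfl fun c _ => Finset.sum_congr rfl fun a _ => Finset.sum_comm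
    _ = _ := Finset.sum_congr rfl fun c _ => Finset.sum_comm

lemma Fin.sum_univ_pi_succ {α M : Type*} [Fintype α] [AddCommMonoid M] {n : ℕ}
    (g : (Fin (n + 1) → α) → M) : ∑ r, g r = ∑ a, ∑ r : Fin n → α, g (vecCons a r) := by
  rw [← (Fin.consEquiv fun _ => α).sum_comp, Fintype.sum_prod_type]
  rfl

lemma Matrix.det_fin_four {R : Type*} [CommRing R] (A : Matrix (Fin 4) (Fin 4) R) :
    A.det =
      A 0 0 * (A 1 1 * (A 2 2 * A 3 3 - A 2 3 * A 3 2) - A 1 2 * (A 2 1 * A 3 3 - A 2 3 * A 3 1)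
        + A 1 3 * (A 2 1 * A 3 2 - A 2 2 * A 3 1))
      - A 0 1 * (A 1 0 * (A 2 2 * A 3 3 - A 2 3 * A 3 2) - A 1 2 * (A 2 0 * A 3 3 - A 2 3 * A 3 0)
        + A 1 3 * (A 2 0 * A 3 2 - A 2 2 * A 3 0))
      + A 0 2 * (A 1 0 * (A 2 1 * A 3 3 - A 2 3 * A 3 1) - A 1 1 * (A 2 0 * A 3 3 - A 2 3 * A 3 0)
        + A 1 3 * (A 2 0 * A 3 1 - A 2 1 * A 3 0))
      - A 0 3 * (A 1 0 * (A 2 1 * A 3 2 - A 2 2 * A 3 1) - A 1 1 * (A 2 0 * A 3 2 - A 2 2 * A 3 0)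
        + A 1 2 * (A 2 0 * A 3 1 - A 2 1 * A 3 0)) := by
  rw [det_succ_row_zero, Fin.sum_univ_four]
  simp only [Nat.succ_eq_add_one, Nat.reduceAdd, Fin.isValue, Fin.coe_ofNat_eq_mod, Nat.zero_mod,
    pow_zero, one_mul, Fin.succAbove_zero, det_fin_three, submatrix_apply, Fin.succ_zero_eq_one,
    Fin.succ_one_eq_two, Fin.reduceSucc, Nat.one_mod, pow_one, neg_mul, Fin.succAbove,
    Fin.castSucc_zero, zero_lt_one, ↓reduceIte, Fin.castSucc_one, lt_self_iff_false,
    Fin.reduceCastSucc, Fin.lt_one_iff, Fin.reduceEq, Nat.reduceMod, even_two, Even.neg_pow, one_pow,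
    Fin.reduceLT, Nat.mod_succ]
  ring

lemma MultilinearMap.map_eq_sum_single {ι R : Type*} [Fintype ι] [DecidableEq ι] [RCLike R]
    {n : ℕ} (f : MultilinearMap R (fun _ : Fin n => EuclideanSpace R ι) R)
    (v : Fin n → EuclideanSpace R ι) :
    f v = ∑ r : Fin n → ι, (∏ i, v i (r i)) * f (fun i => EuclideanSpace.single (r i) 1) := by
  conv_lhs => rw [show v = fun i => ∑ j, v i j • EuclideanSpace.single j 1 from
    funext fun i => ((EuclideanSpace.basisFun ι R).sum_repr (v i)).symm.trans (by simp)]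
  rw [f.map_sum]
  simp [f.map_smul_univ]

theorem AlternatingMap.map_eq_zero_of_finrank_lt {K M N ι : Type*} [Field K] [AddCommGroup M]
    [Module K M] [AddCommGroup N] [Module K N] [Fintype ι] (f : M [⋀^ι]→ₗ[K] N)
    {P : Submodule K M} [FiniteDimensional K P] (hP : Module.finrank K P < Fintype.card ι)
    {v : ι → M} (hv : ∀ i, v i ∈ P) : f v = 0 := by
  refine f.map_linearDependent v fun hli => hP.not_ge ?_
  have : LinearIndependent K (P.subtype ∘ fun i => (⟨v i, hv i⟩ : P)) := hli
  exact (LinearIndependent.of_comp P.subtype this).fintype_card_le_finrank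

lemma kd_self (i : Fin 7) : kd i i = 1 := if_pos rfl

lemma kd_of_ne {i j : Fin 7} (h : i ≠ j) : kd i j = 0 := if_neg h

lemma sum_kd_mul_kd (p s : Fin 7) : ∑ m, kd p m * kd s m = kd p s := by
  simp [kd, Finset.sum_ite_eq]

lemma single_apply_eq_kd (p a : Fin 7) : (EuclideanSpace.single p (1 : ℝ) : E7) a = kd p a := by
  simp [PiLp.single_apply, kd, eq_comm]

/- Once `δ_ps`, `δ_pj`, `δ_rj`, `δ_rs` are written as `Σ_m δ_{pm} δ_{sm}` etc., both sides are
polynomials in the deltas `δ_{pm}, δ_{rm}, δ_{sm}, δ_{jm}` with constant `m`, and agree as such. -/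
lemma phi7_contract (p r s j : Fin 7) :
    ∑ q, phi7 p r q * phi7 q s j = kd p s * kd r j - kd p j * kd r s - psi7 p r s j := by
  rw [← sum_kd_mul_kd p s, ← sum_kd_mul_kd p j, ← sum_kd_mul_kd r j, ← sum_kd_mul_kd r s]
  simp only [psi7, quadForm, det_fin_four, Fin.sum_univ_seven, phi7, tripleForm, kd_self, ne_eq,
    Fin.reduceEq, not_false_eq_true, kd_of_ne, of_apply, cons_val', cons_val_zero, cons_val_one,
    empty_val', cons_val_fin_one, cons_val]
  ring

lemma psi7_swap34 (p q k l : Fin 7) : psi7 p q k l = -psi7 p q l k := by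
  simp only [psi7, quadForm, det_fin_four, of_apply, cons_val', cons_val_zero, cons_val_one,
    empty_val', cons_val_fin_one, cons_val]
  ring

lemma PsiM_transpose (u v : E7) : (PsiM u v)ᵀ = -PsiM u v := by
  ext i j
  rw [neg_apply]
  simp only [PsiM, transpose_apply, of_apply, psi7_swap34 _ _ j i, mul_neg, Finset.sum_neg_distrib]

lemma wedgeM_eq_vecMulVec_sub (u v : E7) :
    wedgeM u v = vecMulVec u.ofLp v.ofLp - vecMulVec v.ofLp u.ofLp := by
  ext i j
  simp [wedgeM, vecMulVec, mul_comm]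

lemma crossE_crossE (u v w : E7) :
    crossE (crossE u v) w = ⟪u, w⟫ • v - ⟪v, w⟫ • u + mulVecE (PsiM u v) w := by
  ext j
  calc (crossE (crossE u v) w) j
      = ∑ b, ∑ p, ∑ q, u p * v q * w b * ∑ a, phi7 p q a * phi7 a b j := by
        simp only [crossE, Finset.sum_mul, Finset.mul_sum]
        rw [Finset.sum_comm]
        refine Finset.sum_congr rfl fun b _ => ?_
        rw [Finset.sum_comm]
        refine Finset.sum_congr rfl fun p _ => ?_
        rw [Finset.sum_comm]
        exact Finset.sum_congr rfl fun q _ => Finset.sum_congr rfl fun a _ => by ring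
    _ = ∑ b, ∑ p, ∑ q, u p * v q * w b * (kd p b * kd q j - kd p j * kd q b - psi7 p q b j) := by
        simp only [phi7_contract]
    _ = _ := by
        simp only [PiLp.add_apply, PiLp.sub_apply, PiLp.smul_apply, smul_eq_mul, PiLp.inner_apply,
          RCLike.inner_apply, conj_trivial, mulVecE, PsiM, of_apply, Finset.sum_mul,
          ← Finset.sum_sub_distrib, ← Finset.sum_add_distrib]
        refine Finset.sum_congr rfl fun b _ => ?_
        simp only [psi7_swap34 _ _ b j, sub_neg_eq_add, mul_add, mul_sub, Finset.sum_add_distrib,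
          Finset.sum_sub_distrib, kd, mul_ite, mul_one, mul_zero, Finset.sum_ite_eq',
          Finset.mem_univ, if_true]
        ring_nf

/-- The decomposable form `e^{a 0} ∧ ⋯ ∧ e^{a (n-1)}`. -/
def elemForm {ι : Type*} {n : ℕ} (a : Fin n → ι) : EuclideanSpace ℝ ι [⋀^Fin n]→ₗ[ℝ] ℝ :=
  detRowAlternating.compLinearMap
    (LinearMap.funLeft ℝ ℝ a ∘ₗ (WithLp.linearEquiv 2 ℝ (ι → ℝ)).toLinearMap)

lemma elemForm_apply {ι : Type*} {n : ℕ} (a : Fin n → ι) (v : Fin n → EuclideanSpace ℝ ι) :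
    elemForm a v = (of fun r c => v r (a c)).det := rfl

def psiForm : E7 [⋀^Fin 4]→ₗ[ℝ] ℝ :=
  elemForm ![3, 4, 5, 6] + elemForm ![0, 2, 3, 5] + elemForm ![1, 2, 5, 6]
  + elemForm ![0, 2, 4, 6] + elemForm ![0, 1, 4, 5]
  - elemForm ![1, 2, 3, 4] - elemForm ![0, 1, 3, 6]

lemma elemForm_single (a b c d : Fin 7) (r : Fin 4 → Fin 7) :
    elemForm ![a, b, c, d] (fun i => EuclideanSpace.single (r i) 1)
      = quadForm a b c d (r 0) (r 1) (r 2) (r 3) := by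
  rw [quadForm, elemForm_apply]
  congr 1
  ext i k
  fin_cases i <;> fin_cases k <;> simp [-PiLp.single_apply, single_apply_eq_kd]

lemma psiForm_single (r : Fin 4 → Fin 7) :
    psiForm (fun i => EuclideanSpace.single (r i) 1) = psi7 (r 0) (r 1) (r 2) (r 3) := by
  simp only [psiForm, psi7, AlternatingMap.add_apply, AlternatingMap.sub_apply, elemForm_single]

lemma psiForm_apply (a b c d : E7) : psiForm ![a, b, c, d] = ⟪c, mulVecE (PsiM a b) d⟫ := by
  rw [← AlternatingMap.coe_multilinearMap, MultilinearMap.map_eq_sum_single]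
  simp only [Fin.sum_univ_pi_succ, Fintype.sum_unique, Fin.prod_univ_four,
    AlternatingMap.coe_multilinearMap, psiForm_single, cons_val_zero, cons_val_one, cons_val_two,
    cons_val_three, tail_cons, head_cons]
  simp only [PiLp.inner_apply, mulVecE, PsiM, of_apply, RCLike.inner_apply, conj_trivial,
    Finset.sum_mul]
  rw [Finset.sum_comm_pairs]
  refine Finset.sum_congr rfl fun k _ => Finset.sum_congr rfl fun l _ =>
    Finset.sum_congr rfl fun p _ => Finset.sum_congr rfl fun q _ => ?_
  ring

lemma IsAssociative.mulVecE_PsiM_mem {P : Submodule ℝ E7} (hP : IsAssociative P) {w y x : E7}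
    (hw : w ∈ P) (hy : y ∈ P) (hx : x ∈ P) : mulVecE (PsiM w y) x ∈ P := by
  have h : mulVecE (PsiM w y) x = crossE (crossE w y) x - (⟪w, x⟫ • y - ⟪y, x⟫ • w) := by
    rw [crossE_crossE]
    abel
  rw [h]
  exact P.sub_mem (hP.2 _ (hP.2 _ hw _ hy) _ hx) (P.sub_mem (P.smul_mem _ hy) (P.smul_mem _ hw))

lemma IsAssociative.mulVecE_PsiM_eq_zero {P : Submodule ℝ E7} (hP : IsAssociative P) {w y x : E7}
    (hw : w ∈ P) (hy : y ∈ P) (hx : x ∈ P) : mulVecE (PsiM w y) x = 0 := by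
  have hz := hP.mulVecE_PsiM_mem hw hy hx
  rw [← inner_self_eq_zero (𝕜 := ℝ), ← psiForm_apply]
  refine psiForm.map_eq_zero_of_finrank_lt (P := P) (by simp [hP.1]) fun i => ?_
  fin_cases i <;> assumption

/-- Proposition 4.6: for `u, v, w, y` in an associative 3-plane,
the matrices `u ∧ v` and `Ψ_{wy}` commute. -/
theorem stmt17 (P : Submodule ℝ E7) (hP : IsAssociative P)
    (u v w y : E7) (hu : u ∈ P) (hv : v ∈ P) (hw : w ∈ P) (hy : y ∈ P) :
    wedgeM u v * PsiM w y - PsiM w y * wedgeM u v = 0 := by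
  have hmulVec : ∀ x ∈ P, PsiM w y *ᵥ x.ofLp = 0 := fun x hx =>
    congrArg WithLp.ofLp (hP.mulVecE_PsiM_eq_zero hw hy hx)
  have hvecMul : ∀ x ∈ P, x.ofLp ᵥ* PsiM w y = 0 := fun x hx => by
    rw [← mulVec_transpose, PsiM_transpose, neg_mulVec, hmulVec x hx, neg_zero]
  rw [wedgeM_eq_vecMulVec_sub, sub_mul, mul_sub, vecMulVec_mul, vecMulVec_mul, mul_vecMulVec,
    mul_vecMulVec, hmulVec u hu, hmulVec v hv, hvecMul u hu, hvecMul v hv]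
  simp

end
end
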